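/- Fix an integer n ≥ 1 and λ ∈ (0,n). For every δ > 0 there is a constant C = C(n,λ,δ) with the following property: for every ball B = B(x_B,r_B) ⊂ ℝⁿ, the function ω̃(x,t) = r_B^{−λ} min{1, (r_B/√(|x−x_B|² + t²))^{λ+δ}} on ℝ^{n+1}_+ satisfies Nω̃(x) ≤ r_B^{−λ} min{1, (√2 r_B/|x−x_B|)^{λ+δ}} for every x ∈ ℝⁿ, and ∫_{ℝⁿ} Nω̃ dΛ_λ^{(∞)} ≤ C. -/

import Mathlib

/-!
If `|x - y| < t`, then `|x - x_B| < t + |y - x_B| ≤ √2 · √(|y - x_B|² + t²)`, which gives the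
pointwise bound. Consequently the level set `{Nω̃ > t}` lies in the ball of radius
`√2 r_B (t r_B^λ)^(-1/(λ+δ))` about `x_B` and is empty for `t ≥ r_B^(-λ)`. Its capacity is thus
`≲ r_B^λ (r_B^(-λ) / t)^(λ/(λ+δ))`, a power of `t` integrable at `0` because `λ < λ + δ`, and
integrating over `(0, r_B^(-λ))` gives a bound independent of `r_B`.
-/

open MeasureTheory Filter Metric Set
open scoped ENNReal NNReal Topology

noncomputable section

abbrev XX (n : ℕ) := EuclideanSpace ℝ (Fin n)

/-- λ-dimensional Hausdorff capacity. -/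
def hausCap (n : ℕ) (lam : ℝ) (E : Set (XX n)) : ℝ≥0∞ :=
  ⨅ (c : ℕ → XX n) (r : ℕ → ℝ) (_ : ∀ j, 0 < r j)
    (_ : E ⊆ ⋃ j, Metric.ball (c j) (r j)), ∑' j, ENNReal.ofReal ((r j) ^ lam)

/-- Choquet integral against the Hausdorff capacity. -/
def choquetInt (n : ℕ) (lam : ℝ) (f : XX n → ℝ≥0∞) : ℝ≥0∞ :=
  ∫⁻ t in Set.Ioi (0 : ℝ), hausCap n lam {x | ENNReal.ofReal t < f x}

/-- Nontangential maximal function of a function on the upper half-space. -/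
def ntMax (n : ℕ) (ω : XX n × ℝ → ℝ≥0∞) (x : XX n) : ℝ≥0∞ :=
  ⨆ (q : XX n × ℝ) (_ : 0 < q.2 ∧ dist x q.1 < q.2), ω q

/-- The upper half-space `ℝ^{n+1}_+`. -/
def upperHalf (n : ℕ) : Set (XX n × ℝ) := {q | 0 < q.2}

/-- Admissible weights in the definition of the `FṪ^λ` quasi-norm. -/
def Admissible (n : ℕ) (lam : ℝ) (F : XX n × ℝ → ℂ) (ω : XX n × ℝ → ℝ≥0∞) : Prop :=
  Measurable ω ∧ choquetInt n lam (ntMax n ω) ≤ 1 ∧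
    ∀ q ∈ upperHalf n, ω q = 0 → F q = 0

/-- The `FṪ^λ` quasi-norm. -/
def FTnorm (n : ℕ) (lam : ℝ) (F : XX n × ℝ → ℂ) : ℝ≥0∞ :=
  ⨅ (ω : XX n × ℝ → ℝ≥0∞) (_ : Admissible n lam F ω),
    (∫⁻ q in upperHalf n, ((‖F q‖₊ : ℝ≥0∞) ^ 2 / ω q) * ENNReal.ofReal q.2⁻¹) ^ (1/2 : ℝ)

/-- The tent over the ball `B(xB, rB)`. -/
def tent (n : ℕ) (xB : XX n) (rB : ℝ) : Set (XX n × ℝ) :=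
  {q | 0 < q.2 ∧ Metric.ball q.1 q.2 ⊆ Metric.ball xB rB}

/-- An `FṪ^λ`-atom. -/
def IsTentAtom (n : ℕ) (lam : ℝ) (a : XX n × ℝ → ℂ) : Prop :=
  Measurable a ∧ ∃ (xB : XX n) (rB : ℝ), 0 < rB ∧
    (∀ q, q ∉ tent n xB rB → a q = 0) ∧
    (∫⁻ q in tent n xB rB, (‖a q‖₊ : ℝ≥0∞) ^ 2 * ENNReal.ofReal q.2⁻¹) ≤ ENNReal.ofReal (rB ^ (-lam))

/-- The tent space `T²₂` norm. -/
def T22norm (n : ℕ) (F : XX n × ℝ → ℂ) : ℝ≥0∞ :=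
  (∫⁻ x : XX n, ∫⁻ q in {q : XX n × ℝ | 0 < q.2 ∧ dist x q.1 < q.2},
      (‖F q‖₊ : ℝ≥0∞) ^ 2 * ENNReal.ofReal (q.2 ^ (-(n : ℝ) - 1))) ^ (1/2 : ℝ)

end

noncomputable section HausdorffCapacity

/-- Covers in `hausCap` consist of countably many balls of positive radius, so a single ball
`B(c, r)` is covered by the concentric balls of radii `r 2⁻ʲ`, at cost `r ^ λ` times this sum. -/
def hausCapBallConst (lam : ℝ) : ℝ := (1 - 2⁻¹ ^ lam)⁻¹

lemma hausCapBallConst_pos {lam : ℝ} (hlam : 0 < lam) : 0 < hausCapBallConst lam :=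
  inv_pos.2 (sub_pos.2 (Real.rpow_lt_one (by norm_num) (by norm_num) hlam))

lemma hausCap_mono {n : ℕ} {lam : ℝ} {E F : Set (XX n)} (h : E ⊆ F) :
    hausCap n lam E ≤ hausCap n lam F :=
  iInf_mono fun _ => iInf_mono fun _ => iInf_mono fun _ => iInf_mono' fun hF => ⟨h.trans hF, le_rfl⟩

lemma hausCap_le_of_subset_ball {n : ℕ} {lam : ℝ} (hlam : 0 < lam) {E : Set (XX n)} {c : XX n}
    {r : ℝ} (hr : 0 < r) (hE : E ⊆ ball c r) :
    hausCap n lam E ≤ ENNReal.ofReal (hausCapBallConst lam * r ^ lam) := by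
  have hq₀ : (0 : ℝ) ≤ 2⁻¹ ^ lam := by positivity
  have hq₁ : (2⁻¹ : ℝ) ^ lam < 1 := Real.rpow_lt_one (by norm_num) (by norm_num) hlam
  have hterm : ∀ j : ℕ, (r * 2⁻¹ ^ j) ^ lam = r ^ lam * (2⁻¹ ^ lam) ^ j := fun j => by
    rw [Real.mul_rpow hr.le (by positivity), ← Real.rpow_natCast, ← Real.rpow_mul (by norm_num),
      mul_comm (j : ℝ), Real.rpow_mul (by norm_num), Real.rpow_natCast]
  have hcover : E ⊆ ⋃ j : ℕ, ball c (r * 2⁻¹ ^ j) :=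
    fun x hx => mem_iUnion.2 ⟨0, by simpa using hE hx⟩
  calc hausCap n lam E ≤ ∑' j : ℕ, ENNReal.ofReal ((r * 2⁻¹ ^ j) ^ lam) :=
        iInf_le_of_le (fun _ => c) <| iInf_le_of_le (fun j => r * 2⁻¹ ^ j) <|
          iInf_le_of_le (fun _ => by positivity) <| iInf_le_of_le hcover le_rfl
    _ = ENNReal.ofReal (∑' j : ℕ, r ^ lam * (2⁻¹ ^ lam) ^ j) := by
        simp_rw [hterm]
        exact (ENNReal.ofReal_tsum_of_nonneg (fun _ => by positivity)
          ((summable_geometric_of_lt_one hq₀ hq₁).mul_left _)).symm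
    _ = ENNReal.ofReal (hausCapBallConst lam * r ^ lam) := by
        rw [tsum_mul_left, tsum_geometric_of_lt_one hq₀ hq₁, hausCapBallConst, mul_comm]

lemma hausCap_empty {n : ℕ} {lam : ℝ} (hlam : 0 < lam) : hausCap n lam (∅ : Set (XX n)) = 0 := by
  have hlim : Tendsto (fun r : ℝ => ENNReal.ofReal (hausCapBallConst lam * r ^ lam))
      (𝓝[>] 0) (𝓝 0) := by
    have h := ((Real.continuousAt_rpow_const 0 lam (Or.inr hlam.le)).const_mul
      (hausCapBallConst lam)).tendsto
    rw [Real.zero_rpow hlam.ne', mul_zero] at h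
    simpa using (ENNReal.tendsto_ofReal h).mono_left nhdsWithin_le_nhds
  refine le_antisymm (ge_of_tendsto hlim ?_) zero_le
  filter_upwards [self_mem_nhdsWithin] with r (hr : 0 < r)
  exact hausCap_le_of_subset_ball hlam (c := 0) hr (empty_subset _)

lemma choquetInt_mono {n : ℕ} {lam : ℝ} {f g : XX n → ℝ≥0∞} (hfg : f ≤ g) :
    choquetInt n lam f ≤ choquetInt n lam g :=
  lintegral_mono fun _ => hausCap_mono fun _ hx => hx.trans_le (hfg _)

end HausdorffCapacity

noncomputable section DecayProfile

variable {X : Type*} [PseudoMetricSpace X]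

/-- At `x = c` the quotient is `a / 0 = ∞` in `ℝ≥0∞`, so the profile equals `s` there. -/
def decayProfile (c : X) (a s p : ℝ) (x : X) : ℝ≥0∞ :=
  ENNReal.ofReal s * min 1 ((ENNReal.ofReal a / ENNReal.ofReal (dist x c)) ^ p)

lemma dist_le_sqrt_two_mul_sqrt_dist_sq_add_sq {x y c : X} {t : ℝ} (h : dist x y < t) :
    dist x c ≤ √2 * √(dist y c ^ 2 + t ^ 2) := by
  rw [← Real.sqrt_mul zero_le_two]
  refine (dist_triangle x y c).trans ?_
  refine Real.le_sqrt_of_sq_le ?_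
  nlinarith [sq_nonneg (t - dist y c), dist_nonneg (x := x) (y := y), dist_nonneg (x := y) (y := c)]

lemma setOf_lt_decayProfile_subset_ball (c : X) {a s p t : ℝ} (ha : 0 < a) (hs : 0 < s)
    (hp : 0 < p) (ht : 0 < t) :
    {x | ENNReal.ofReal t < decayProfile c a s p x} ⊆ ball c (a * (s / t) ^ p⁻¹) := by
  intro x (hx : ENNReal.ofReal t < _)
  by_contra hxR
  set R := a * (s / t) ^ p⁻¹
  have hR : 0 < R := by positivity
  have hd : R ≤ dist x c := not_lt.1 hxR
  have haR : (a / R) ^ p = t / s := by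
    rw [div_mul_cancel_left₀ ha.ne', Real.inv_rpow (by positivity), ← Real.rpow_mul (by positivity),
      inv_mul_cancel₀ hp.ne', Real.rpow_one, inv_div]
  have hquot : (ENNReal.ofReal a / ENNReal.ofReal (dist x c)) ^ p ≤ ENNReal.ofReal (t / s) := by
    rw [← ENNReal.ofReal_div_of_pos (hR.trans_le hd), ← haR,
      ENNReal.ofReal_rpow_of_nonneg (by positivity) hp.le]
    gcongr
  refine hx.not_ge ?_
  calc decayProfile c a s p x ≤ ENNReal.ofReal s * ENNReal.ofReal (t / s) :=
        mul_le_mul_right ((min_le_right _ _).trans hquot) _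
    _ = ENNReal.ofReal t := by rw [← ENNReal.ofReal_mul hs.le, mul_div_cancel₀ _ hs.ne']

lemma setOf_lt_decayProfile_eq_empty (c : X) (a : ℝ) {s t : ℝ} (p : ℝ) (hst : s ≤ t) :
    {x | ENNReal.ofReal t < decayProfile c a s p x} = ∅ := by
  refine eq_empty_of_forall_notMem fun x (hx : ENNReal.ofReal t < _) => hx.not_ge ?_
  calc decayProfile c a s p x ≤ ENNReal.ofReal s * 1 := mul_le_mul_right (min_le_left _ _) _
    _ ≤ ENNReal.ofReal t := by rw [mul_one]; exact ENNReal.ofReal_le_ofReal hst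

end DecayProfile

lemma ntMax_le_decayProfile {n : ℕ} (c : XX n) {r s p : ℝ} (hr : 0 < r) (hp : 0 ≤ p) (x : XX n) :
    ntMax n (fun q => ENNReal.ofReal (s * min 1 ((r / √(dist q.1 c ^ 2 + q.2 ^ 2)) ^ p))) x ≤
      decayProfile c (√2 * r) s p x := by
  refine iSup₂_le fun q ⟨hq, hxq⟩ => ?_
  set ρ := √(dist q.1 c ^ 2 + q.2 ^ 2)
  have hρ : 0 < ρ := Real.sqrt_pos.2 (by positivity)
  have hbase : ENNReal.ofReal (r / ρ) ≤ ENNReal.ofReal (√2 * r) / ENNReal.ofReal (dist x c) := by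
    rw [← mul_div_mul_left r ρ (by positivity : √2 ≠ 0), ENNReal.ofReal_div_of_pos (by positivity)]
    exact ENNReal.div_le_div_left
      (ENNReal.ofReal_le_ofReal (dist_le_sqrt_two_mul_sqrt_dist_sq_add_sq hxq)) _
  dsimp only
  rw [ENNReal.ofReal_mul' (by positivity), decayProfile,
    ENNReal.ofReal_min, ENNReal.ofReal_one,
    ← ENNReal.ofReal_rpow_of_nonneg (by positivity) hp]
  gcongr

lemma hausCap_setOf_lt_decayProfile_le {n : ℕ} {lam a s p t : ℝ} (hlam : 0 < lam) (c : XX n)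
    (ha : 0 < a) (hs : 0 < s) (hp : 0 < p) (ht : 0 < t) :
    hausCap n lam {x | ENNReal.ofReal t < decayProfile c a s p x} ≤
      (Ioo 0 s).indicator
        (fun t => ENNReal.ofReal (hausCapBallConst lam * a ^ lam * (s / t) ^ (lam / p))) t := by
  rcases lt_or_ge t s with hts | hst
  · rw [indicator_of_mem (show t ∈ Ioo 0 s from ⟨ht, hts⟩)]
    refine (hausCap_le_of_subset_ball hlam (by positivity)
      (setOf_lt_decayProfile_subset_ball c ha hs hp ht)).trans_eq ?_
    rw [Real.mul_rpow ha.le (by positivity), ← Real.rpow_mul (by positivity), inv_mul_eq_div,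
      mul_assoc]
  · rw [setOf_lt_decayProfile_eq_empty c a p hst, hausCap_empty hlam]
    exact zero_le

lemma lintegral_Ioo_ofReal_mul_div_rpow {b s θ : ℝ} (hb : 0 ≤ b) (hs : 0 < s) (hθ : θ < 1) :
    ∫⁻ t in Ioo 0 s, ENNReal.ofReal (b * (s / t) ^ θ) = ENNReal.ofReal (b * (s / (1 - θ))) := by
  have hpow : EqOn (fun t => b * (s / t) ^ θ) (fun t => b * s ^ θ * t ^ (-θ)) (Ioo 0 s) :=
    fun t ht => by
      simp only [Real.div_rpow hs.le ht.1.le, Real.rpow_neg ht.1.le]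
      ring
  have hint : IntegrableOn (fun t : ℝ => t ^ (-θ)) (Ioo 0 s) :=
    (intervalIntegral.integrableOn_Ioo_rpow_iff hs).2 (by linarith)
  have hval : ∫ t in Ioo 0 s, t ^ (-θ) = s ^ (-θ + 1) / (-θ + 1) := by
    rw [← integral_Ioc_eq_integral_Ioo, ← intervalIntegral.integral_of_le hs.le,
      integral_rpow (Or.inl (by linarith)), Real.zero_rpow (by linarith), sub_zero]
  have hnonneg : 0 ≤ᵐ[volume.restrict (Ioo 0 s)] fun t : ℝ => b * s ^ θ * t ^ (-θ) := by
    filter_upwards [ae_restrict_mem measurableSet_Ioo] with t ⟨ht, _⟩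
    positivity
  rw [setLIntegral_congr_fun measurableSet_Ioo fun t ht => congrArg ENNReal.ofReal (hpow ht),
    ← ofReal_integral_eq_lintegral_ofReal (hint.const_mul _) hnonneg, integral_const_mul, hval,
    Real.rpow_add hs, Real.rpow_neg hs.le, Real.rpow_one]
  congr 1
  field_simp
  ring

lemma choquetInt_decayProfile_le {n : ℕ} {lam a s p : ℝ} (hlam : 0 < lam) (c : XX n)
    (ha : 0 < a) (hs : 0 < s) (hp : lam < p) :
    choquetInt n lam (decayProfile c a s p) ≤
      ENNReal.ofReal (hausCapBallConst lam * a ^ lam * (s / (1 - lam / p))) := by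
  have hp₀ : 0 < p := hlam.trans hp
  calc choquetInt n lam (decayProfile c a s p)
      ≤ ∫⁻ t in Ioi 0, (Ioo 0 s).indicator
          (fun t => ENNReal.ofReal (hausCapBallConst lam * a ^ lam * (s / t) ^ (lam / p))) t :=
        setLIntegral_mono (Measurable.indicator (by fun_prop) measurableSet_Ioo)
          fun t ht => hausCap_setOf_lt_decayProfile_le hlam c ha hs hp₀ ht
    _ = ∫⁻ t in Ioo 0 s,
          ENNReal.ofReal (hausCapBallConst lam * a ^ lam * (s / t) ^ (lam / p)) := by
        rw [setLIntegral_indicator measurableSet_Ioo, inter_eq_left.2 Ioo_subset_Ioi_self]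
    _ = _ := lintegral_Ioo_ofReal_mul_div_rpow
        (mul_nonneg (hausCapBallConst_pos hlam).le (by positivity)) hs ((div_lt_one hp₀).2 hp)

theorem statement7_general (n : ℕ) (lam : ℝ) (hlam0 : 0 < lam)
    (δ : ℝ) (hδ : 0 < δ) :
    ∃ C : ℝ, 0 < C ∧ ∀ (xB : XX n) (rB : ℝ), 0 < rB →
      (∀ x : XX n,
        ntMax n (fun q => ENNReal.ofReal (rB ^ (-lam) *
            min 1 ((rB / Real.sqrt (dist q.1 xB ^ 2 + q.2 ^ 2)) ^ (lam + δ)))) x ≤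
          ENNReal.ofReal (rB ^ (-lam)) *
            min 1 ((ENNReal.ofReal (Real.sqrt 2 * rB) / ENNReal.ofReal (dist x xB))
              ^ (lam + δ))) ∧
      choquetInt n lam
        (ntMax n (fun q => ENNReal.ofReal (rB ^ (-lam) *
          min 1 ((rB / Real.sqrt (dist q.1 xB ^ 2 + q.2 ^ 2)) ^ (lam + δ))))) ≤
        ENNReal.ofReal C := by
  refine ⟨hausCapBallConst lam * √2 ^ lam * ((lam + δ) / δ),
    mul_pos (mul_pos (hausCapBallConst_pos hlam0) (by positivity)) (by positivity),
    fun xB rB hrB => ⟨ntMax_le_decayProfile xB hrB (by positivity), ?_⟩⟩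
  calc _ ≤ choquetInt n lam (decayProfile xB (√2 * rB) (rB ^ (-lam)) (lam + δ)) :=
        choquetInt_mono (ntMax_le_decayProfile xB hrB (by positivity))
    _ ≤ ENNReal.ofReal (hausCapBallConst lam * (√2 * rB) ^ lam *
          (rB ^ (-lam) / (1 - lam / (lam + δ)))) :=
        choquetInt_decayProfile_le hlam0 xB (by positivity) (by positivity) (by linarith)
    _ = _ := by
        rw [Real.mul_rpow (by positivity) hrB.le, Real.rpow_neg hrB.le]
        congr 1
        have hθ : 1 - lam / (lam + δ) = δ / (lam + δ) := by field_simp; ring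
        have hrBpow : rB ^ lam ≠ 0 := by positivity
        rw [hθ, div_div_eq_mul_div]
        field_simp

theorem statement7 (n : ℕ) (hn : 1 ≤ n) (lam : ℝ) (hlam0 : 0 < lam) (hlamn : lam < n)
    (δ : ℝ) (hδ : 0 < δ) :
    ∃ C : ℝ, 0 < C ∧ ∀ (xB : XX n) (rB : ℝ), 0 < rB →
      (∀ x : XX n,
        ntMax n (fun q => ENNReal.ofReal (rB ^ (-lam) *
            min 1 ((rB / Real.sqrt (dist q.1 xB ^ 2 + q.2 ^ 2)) ^ (lam + δ)))) x ≤
          ENNReal.ofReal (rB ^ (-lam)) *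
            min 1 ((ENNReal.ofReal (Real.sqrt 2 * rB) / ENNReal.ofReal (dist x xB))
              ^ (lam + δ))) ∧
      choquetInt n lam
        (ntMax n (fun q => ENNReal.ofReal (rB ^ (-lam) *
          min 1 ((rB / Real.sqrt (dist q.1 xB ^ 2 + q.2 ^ 2)) ^ (lam + δ))))) ≤
        ENNReal.ofReal C :=
  statement7_general n lam hlam0 δ hδ
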